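/- arXiv:2005.12449 — 4 statements merged into one kernel-verified Lean document; each statement's English description precedes it below -/
import Mathlib

section
/- Fix a positive integer N, an integer k, and τ ∈ ℍ, and let Z_k^{(N)} = {z ∈ ℂ : θ_k^{(N)}(z,τ) = 0} be the set of zeros of z ↦ θ_k^{(N)}(z,τ). If N is odd, then Z_k^{(N)} = { m/N + (k/N)τ + nτ : m, n ∈ ℤ }. If N is even, then Z_k^{(N)} = { 1/(2N) + m/N + (k/N)τ + nτ : m, n ∈ ℤ }. -/
open scoped UpperHalfPlane

/-- `e(x) = exp(2πix)`. -/
noncomputable def e (x : ℂ) : ℂ := Complex.exp (2 * Real.pi * Complex.I * x)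

/-- The theta function with characteristic `(p, q)`:
`θ_{(p,q)}(z,τ) = ∑_{n ∈ ℤ} e((1/2)(n+p)²τ + (n+p)(z+q))`. -/
noncomputable def jtheta (p q : ℝ) (z τ : ℂ) : ℂ :=
  ∑' n : ℤ, e ((1 / 2 : ℂ) * ((n : ℂ) + p) ^ 2 * τ + ((n : ℂ) + p) * (z + q))

/-- `θ_k^{(N)}(z,τ) = θ_{(1/2 - k/N, N/2)}(Nz, Nτ)`. -/
noncomputable def thetaN (N : ℕ) (k : ℝ) (z τ : ℂ) : ℂ :=
  jtheta (1 / 2 - k / N) (N / 2) (N * z) (N * τ)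

/-!
Up to a nowhere-vanishing exponential factor, `thetaN N k z τ` is Jacobi's `θ(w, Nτ)` at
`w = Nz + (1/2 - k/N) Nτ + N/2`, so everything reduces to the zero set of `θ(·, τ)`, which is
`1/2 + τ/2 + ℤ + ℤτ`. These points are zeros by quasi-periodicity. Conversely, `θ(·, τ)` has no
zero in the strip `|Im z| < Im τ / 2`: the product formula
`θ(z, τ) θ(z + 1/2, τ) = θ(2z + 1/2, 2τ) θ(1/2, 2τ)` turns such a zero into one for `2τ` in the same
relative position, and after enough doublings the constant term `1` dominates the series.
Quasi-periodicity moves any zero onto the line `τ/2 + ℝ`, and the functional equation turns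
`θ(τ/2 + a, τ)` into a multiple of `θ(1/2 - a τ', τ')` with `τ' = -1/τ`, where the strip argument
for `τ'` forces `a ∈ 1/2 + ℤ`.
-/

open Complex
open scoped Real

lemma jacobiTheta₂_add_int (z τ : ℂ) (m : ℤ) : jacobiTheta₂ (z + m) τ = jacobiTheta₂ z τ := by
  refine tsum_congr fun n ↦ ?_
  rw [jacobiTheta₂_term, jacobiTheta₂_term,
    show 2 * π * I * n * (z + m) + π * I * n ^ 2 * τ =
      (2 * π * I * n * z + π * I * n ^ 2 * τ) + (n * m : ℤ) * (2 * π * I) by push_cast; ring,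
    exp_add, exp_int_mul_two_pi_mul_I, mul_one]

lemma jacobiTheta₂_add_int_mul (z τ : ℂ) (n : ℤ) :
    jacobiTheta₂ (z + n * τ) τ = cexp (-π * I * (n ^ 2 * τ + 2 * n * z)) * jacobiTheta₂ z τ := by
  conv_rhs => rw [jacobiTheta₂, ← tsum_mul_left, ← (Equiv.addRight n).tsum_eq]
  refine tsum_congr fun j ↦ ?_
  simp only [jacobiTheta₂_term, Equiv.coe_addRight, Int.cast_add, ← exp_add]
  congr 1
  ring

lemma jacobiTheta₂_add_int_mul_eq_zero_iff (z τ : ℂ) (n : ℤ) :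
    jacobiTheta₂ (z + n * τ) τ = 0 ↔ jacobiTheta₂ z τ = 0 := by
  simp [jacobiTheta₂_add_int_mul, exp_ne_zero]

lemma jacobiTheta₂_half_add_half_mul_self (τ : ℂ) : jacobiTheta₂ (1 / 2 + τ / 2) τ = 0 := by
  have hshift := jacobiTheta₂_add_left' (1 / 2 - τ / 2) τ
  rw [show 1 / 2 - τ / 2 = -(1 / 2 + τ / 2) + 1 by ring, jacobiTheta₂_add_left,
    jacobiTheta₂_neg_left, show -(1 / 2 + τ / 2) + 1 + τ = 1 / 2 + τ / 2 by ring,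
    show -π * I * (τ + 2 * (-(1 / 2 + τ / 2) + 1)) = π * I + (-1 : ℤ) * (2 * π * I) by
      push_cast; ring,
    exp_add, exp_int_mul_two_pi_mul_I, exp_pi_mul_I] at hshift
  linear_combination hshift / 2

lemma summable_norm_jacobiTheta₂_term (z : ℂ) {τ : ℂ} (hτ : 0 < τ.im) :
    Summable fun n : ℤ ↦ ‖jacobiTheta₂_term n z τ‖ :=
  summable_norm_iff.mpr ((summable_jacobiTheta₂_term_iff z τ).mpr hτ)

lemma hasSum_jacobiTheta₂_term_mul (z w : ℂ) {τ σ : ℂ} (hτ : 0 < τ.im) (hσ : 0 < σ.im) :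
    HasSum (fun p : ℤ × ℤ ↦ jacobiTheta₂_term p.1 z τ * jacobiTheta₂_term p.2 w σ)
      (jacobiTheta₂ z τ * jacobiTheta₂ w σ) :=
  HasSum.mul (f := (jacobiTheta₂_term · z τ)) (g := (jacobiTheta₂_term · w σ))
    (hasSum_jacobiTheta₂_term z hτ) (hasSum_jacobiTheta₂_term w hσ)
    (summable_mul_of_summable_norm (f := (jacobiTheta₂_term · z τ)) (g := (jacobiTheta₂_term · w σ))
      (summable_norm_jacobiTheta₂_term z hτ) (summable_norm_jacobiTheta₂_term w hσ))

lemma jacobiTheta₂_term_add_mul_term_sub (u v : ℤ) (z τ : ℂ) :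
    jacobiTheta₂_term (u + v) z τ * jacobiTheta₂_term (u - v) (z + 1 / 2) τ =
      jacobiTheta₂_term u (2 * z + 1 / 2) (2 * τ) * jacobiTheta₂_term v (1 / 2) (2 * τ) := by
  simp only [jacobiTheta₂_term, ← exp_add]
  rw [show 2 * π * I * (u + v : ℤ) * z + π * I * (u + v : ℤ) ^ 2 * τ +
      (2 * π * I * (u - v : ℤ) * (z + 1 / 2) + π * I * (u - v : ℤ) ^ 2 * τ) =
      2 * π * I * u * (2 * z + 1 / 2) + π * I * u ^ 2 * (2 * τ) +
        (2 * π * I * v * (1 / 2) + π * I * v ^ 2 * (2 * τ)) + (-v : ℤ) * (2 * π * I) by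
      push_cast; ring,
    exp_add, exp_int_mul_two_pi_mul_I, mul_one]

lemma jacobiTheta₂_term_add_add_one_mul_term_sub (u v : ℤ) (z τ : ℂ) :
    jacobiTheta₂_term (u + v + 1) z τ * jacobiTheta₂_term (u - v) (z + 1 / 2) τ =
      cexp (2 * π * I * z + π * I * τ) *
        (jacobiTheta₂_term u (2 * z + 1 / 2 + τ) (2 * τ) *
          jacobiTheta₂_term v (τ - 1 / 2) (2 * τ)) := by
  simp only [jacobiTheta₂_term, ← exp_add]
  congr 1
  push_cast
  ring

/-- `(u, v) ↦ (u + v, u - v)` and `(u, v) ↦ (u + v + 1, u - v)` parametrize the pairs of integers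
of equal and of opposite parity. -/
noncomputable def Int.prodParityEquiv : (ℤ × ℤ) ⊕ (ℤ × ℤ) ≃ ℤ × ℤ :=
  Equiv.ofBijective
    (Sum.elim (fun p ↦ (p.1 + p.2, p.1 - p.2)) (fun p ↦ (p.1 + p.2 + 1, p.1 - p.2)))
    ⟨Function.Injective.sumElim
      (fun p q h ↦ by simp only [Prod.mk.injEq] at h; ext <;> omega)
      (fun p q h ↦ by simp only [Prod.mk.injEq] at h; ext <;> omega)
      (fun p q h ↦ by simp only [Prod.mk.injEq] at h; omega),
    fun ⟨m, n⟩ ↦ by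
      rcases Int.emod_two_eq_zero_or_one (m - n) with h | h
      · exact ⟨.inl ((m + n) / 2, (m - n) / 2), by simp only [Sum.elim_inl, Prod.mk.injEq]; omega⟩
      · exact ⟨.inr ((m + n - 1) / 2, (m - n - 1) / 2),
          by simp only [Sum.elim_inr, Prod.mk.injEq]; omega⟩⟩

/-- Splitting the double series of `θ(z, τ) θ(z + 1/2, τ)` by the parity of `m - n`; the odd part
vanishes because it contains the factor `θ(τ - 1/2, 2τ) = 0`. -/
theorem jacobiTheta₂_mul_jacobiTheta₂_add_half (z : ℂ) {τ : ℂ} (hτ : 0 < τ.im) :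
    jacobiTheta₂ z τ * jacobiTheta₂ (z + 1 / 2) τ =
      jacobiTheta₂ (2 * z + 1 / 2) (2 * τ) * jacobiTheta₂ (1 / 2) (2 * τ) := by
  have h2τ : 0 < (2 * τ).im := by simpa using hτ
  have hzero : jacobiTheta₂ (τ - 1 / 2) (2 * τ) = 0 := by
    rw [← jacobiTheta₂_add_left, ← jacobiTheta₂_half_add_half_mul_self (2 * τ)]
    ring_nf
  have heven := hasSum_jacobiTheta₂_term_mul (2 * z + 1 / 2) (1 / 2) h2τ h2τ
  have hodd : HasSum (fun p : ℤ × ℤ ↦ cexp (2 * π * I * z + π * I * τ) *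
      (jacobiTheta₂_term p.1 (2 * z + 1 / 2 + τ) (2 * τ) *
        jacobiTheta₂_term p.2 (τ - 1 / 2) (2 * τ))) 0 := by
    simpa only [hzero, mul_zero] using
      (hasSum_jacobiTheta₂_term_mul (2 * z + 1 / 2 + τ) (τ - 1 / 2) h2τ h2τ).mul_left
        (cexp (2 * π * I * z + π * I * τ))
  refine (hasSum_jacobiTheta₂_term_mul z (z + 1 / 2) hτ hτ).unique ?_
  rw [← Int.prodParityEquiv.hasSum_iff, ← add_zero (jacobiTheta₂ (2 * z + 1 / 2) (2 * τ) * _)]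
  refine HasSum.sum ?_ ?_
  · convert heven using 1
    funext p
    exact jacobiTheta₂_term_add_mul_term_sub p.1 p.2 z τ
  · convert hodd using 1
    funext p
    exact jacobiTheta₂_term_add_add_one_mul_term_sub p.1 p.2 z τ

lemma hasSum_pow_natAbs {x : ℝ} (h0 : 0 ≤ x) (h1 : x < 1) :
    HasSum (fun n : ℤ ↦ x ^ n.natAbs) ((1 + x) / (1 - x)) := by
  have hgeom := hasSum_geometric_of_lt_one h0 h1
  rw [show (1 + x) / (1 - x) = (1 - x)⁻¹ + (1 - x)⁻¹ - x ^ (0 : ℤ).natAbs by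
    field_simp [(sub_pos.mpr h1).ne']; ring]
  exact HasSum.of_nat_of_neg (by simpa using hgeom) (by simpa using hgeom)

lemma norm_jacobiTheta₂_term_le_pow {r : ℝ} {z τ : ℂ} (hτ : 0 < τ.im) (hz : |z.im| ≤ r * τ.im)
    (n : ℤ) : ‖jacobiTheta₂_term n z τ‖ ≤ rexp (-π * τ.im * (1 - 2 * r)) ^ n.natAbs := by
  refine (norm_jacobiTheta₂_term_le hτ hz le_rfl n).trans ?_
  rw [← Real.exp_nat_mul, Real.exp_le_exp, Nat.cast_natAbs, Int.cast_abs]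
  have : |(n : ℝ)| ≤ (n : ℝ) ^ 2 := by
    rcases eq_or_ne n 0 with rfl | hn
    · simp
    · rw [← sq_abs]
      exact le_self_pow₀ (by exact_mod_cast Int.one_le_abs hn) two_ne_zero
  nlinarith [mul_nonneg (mul_nonneg Real.pi_pos.le hτ.le) (sub_nonneg.mpr this)]

lemma norm_jacobiTheta₂_sub_one_le {r : ℝ} {z τ : ℂ} (hr : r < 1 / 2) (hτ : 0 < τ.im)
    (hz : |z.im| ≤ r * τ.im) :
    ‖jacobiTheta₂ z τ - 1‖ ≤
      2 * rexp (-π * τ.im * (1 - 2 * r)) / (1 - rexp (-π * τ.im * (1 - 2 * r))) := by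
  set q := rexp (-π * τ.im * (1 - 2 * r))
  have hq1 : q < 1 := by
    have : 0 < π * τ.im * (1 - 2 * r) := mul_pos (mul_pos Real.pi_pos hτ) (by linarith)
    exact Real.exp_lt_one_iff.mpr (by linarith)
  have hbound := (hasSum_pow_natAbs (Real.exp_pos _).le hq1).sub (hasSum_ite_eq (0 : ℤ) (1 : ℝ))
  rw [show (1 + q) / (1 - q) - 1 = 2 * q / (1 - q) by
    field_simp [(sub_pos.mpr hq1).ne']; ring] at hbound
  refine ((hasSum_jacobiTheta₂_term z hτ).sub (hasSum_ite_eq (0 : ℤ) (1 : ℂ))).norm_le_of_bounded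
    hbound fun n ↦ ?_
  rcases eq_or_ne n 0 with rfl | hn
  · simp [jacobiTheta₂_term]
  · simpa [hn] using norm_jacobiTheta₂_term_le_pow hτ hz n

lemma jacobiTheta₂_ne_zero_of_exp_lt {r : ℝ} {z τ : ℂ} (hr : r < 1 / 2) (hτ : 0 < τ.im)
    (hz : |z.im| ≤ r * τ.im) (hq : rexp (-π * τ.im * (1 - 2 * r)) < 1 / 3) :
    jacobiTheta₂ z τ ≠ 0 := by
  intro h0
  have := norm_jacobiTheta₂_sub_one_le hr hτ hz
  rw [h0, zero_sub, norm_neg, norm_one, le_div_iff₀ (by linarith)] at this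
  linarith

lemma jacobiTheta₂_ne_zero_of_exp_pow_lt {r : ℝ} (hr0 : 0 ≤ r) (hr : r < 1 / 2) (k : ℕ) :
    ∀ {z τ : ℂ}, 0 < τ.im → |z.im| ≤ r * τ.im →
      rexp (-π * τ.im * (1 - 2 * r)) ^ 2 ^ k < 1 / 3 → jacobiTheta₂ z τ ≠ 0 := by
  induction k with
  | zero => exact fun hτ hz hq ↦ jacobiTheta₂_ne_zero_of_exp_lt hr hτ hz (by simpa using hq)
  | succ k ih =>
    intro z τ hτ hz hq
    have him : (2 * τ).im = 2 * τ.im := by simp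
    have h2τ : 0 < (2 * τ).im := by simpa using hτ
    have hq2 : rexp (-π * (2 * τ).im * (1 - 2 * r)) ^ 2 ^ k < 1 / 3 := by
      rwa [him, show -π * (2 * τ.im) * (1 - 2 * r) = (2 : ℕ) * (-π * τ.im * (1 - 2 * r)) by
        push_cast; ring, Real.exp_nat_mul, ← pow_mul, ← pow_succ']
    have hprod := jacobiTheta₂_mul_jacobiTheta₂_add_half z hτ
    have hleft : jacobiTheta₂ (2 * z + 1 / 2) (2 * τ) ≠ 0 := by
      refine ih h2τ ?_ hq2
      rw [him, show (2 * z + 1 / 2).im = 2 * z.im by simp, abs_mul, abs_two]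
      linarith
    have hright : jacobiTheta₂ (1 / 2) (2 * τ) ≠ 0 :=
      ih h2τ (by simpa using mul_nonneg hr0 h2τ.le) hq2
    exact left_ne_zero_of_mul (hprod ▸ mul_ne_zero hleft hright)

theorem jacobiTheta₂_ne_zero_of_two_mul_abs_im_lt {z τ : ℂ} (hτ : 0 < τ.im)
    (hz : 2 * |z.im| < τ.im) : jacobiTheta₂ z τ ≠ 0 := by
  set r := |z.im| / τ.im
  have hr : r < 1 / 2 := by rw [div_lt_iff₀ hτ]; linarith
  have hq1 : rexp (-π * τ.im * (1 - 2 * r)) < 1 := by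
    have : 0 < π * τ.im * (1 - 2 * r) := mul_pos (mul_pos Real.pi_pos hτ) (by linarith)
    exact Real.exp_lt_one_iff.mpr (by linarith)
  obtain ⟨k, hk⟩ := exists_pow_lt_of_lt_one (by norm_num : (0 : ℝ) < 1 / 3) hq1
  refine jacobiTheta₂_ne_zero_of_exp_pow_lt (by positivity) hr k hτ (div_mul_cancel₀ _ hτ.ne').ge
    (lt_of_le_of_lt ?_ hk)
  exact pow_le_pow_of_le_one (Real.exp_pos _).le hq1.le k.lt_two_pow_self.le

lemma exists_im_add_int_mul_eq_half_of_jacobiTheta₂_eq_zero {z τ : ℂ} (hτ : 0 < τ.im)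
    (h0 : jacobiTheta₂ z τ = 0) : ∃ n : ℤ, (z + n * τ).im = τ.im / 2 := by
  obtain ⟨n, ⟨hlow, hhigh⟩, -⟩ := existsUnique_add_zsmul_mem_Ioc hτ z.im (-(τ.im / 2))
  have him : (z + n * τ).im = z.im + n • τ.im := by simp
  refine ⟨n, le_antisymm (by linarith) (not_lt.mp fun hlt ↦ ?_)⟩
  refine jacobiTheta₂_ne_zero_of_two_mul_abs_im_lt hτ ?_
    ((jacobiTheta₂_add_int_mul_eq_zero_iff z τ n).mpr h0)
  rw [him]
  have := abs_lt.mpr ⟨(by linarith : -(τ.im / 2) < z.im + n • τ.im), him ▸ hlt⟩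
  linarith

lemma exists_eq_int_add_half_of_jacobiTheta₂_half_add_eq_zero {τ : ℂ} (hτ : 0 < τ.im) {a : ℝ}
    (h0 : jacobiTheta₂ (τ / 2 + a) τ = 0) : ∃ j : ℤ, a = j + 1 / 2 := by
  have hτ0 : τ ≠ 0 := fun h ↦ by simp [h] at hτ
  have hτ' : 0 < (-1 / τ).im := by
    rw [neg_div, neg_im, one_div, inv_im, neg_div, neg_neg]
    exact div_pos hτ (normSq_pos.mpr hτ0)
  rw [jacobiTheta₂_functional_equation] at h0
  have h0' : jacobiTheta₂ (1 / 2 + (-a : ℝ) * (-1 / τ)) (-1 / τ) = 0 := by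
    rw [show (1 : ℂ) / 2 + (-a : ℝ) * (-1 / τ) = (τ / 2 + a) / τ by push_cast; field_simp]
    simpa [hτ0, exp_ne_zero] using h0
  obtain ⟨n, hn⟩ := exists_im_add_int_mul_eq_half_of_jacobiTheta₂_eq_zero hτ' h0'
  have him : ((n : ℝ) - a - 1 / 2) * (-1 / τ).im = 0 := by
    rw [add_im, add_im, im_ofReal_mul, ← ofReal_intCast, im_ofReal_mul] at hn
    norm_num at hn
    linear_combination hn
  refine ⟨n - 1, ?_⟩
  push_cast
  linarith [(mul_eq_zero.mp him).resolve_right hτ'.ne']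

theorem jacobiTheta₂_eq_zero_iff {z τ : ℂ} (hτ : 0 < τ.im) :
    jacobiTheta₂ z τ = 0 ↔ ∃ m n : ℤ, z = 1 / 2 + τ / 2 + m + n * τ := by
  constructor
  · intro h0
    obtain ⟨n, hn⟩ := exists_im_add_int_mul_eq_half_of_jacobiTheta₂_eq_zero hτ h0
    have hw : z + n * τ = τ / 2 + (z + n * τ - τ / 2).re := by
      apply Complex.ext <;> simp [hn]
    obtain ⟨j, hj⟩ := exists_eq_int_add_half_of_jacobiTheta₂_half_add_eq_zero hτ
      (hw ▸ (jacobiTheta₂_add_int_mul_eq_zero_iff z τ n).mpr h0)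
    refine ⟨j, -n, ?_⟩
    rw [hj] at hw
    push_cast at hw ⊢
    linear_combination hw
  · rintro ⟨m, n, rfl⟩
    rw [jacobiTheta₂_add_int_mul_eq_zero_iff, jacobiTheta₂_add_int]
    exact jacobiTheta₂_half_add_half_mul_self τ

lemma jtheta_eq_mul_jacobiTheta₂ (p q : ℝ) (z τ : ℂ) :
    jtheta p q z τ = e (1 / 2 * p ^ 2 * τ + p * (z + q)) * jacobiTheta₂ (z + p * τ + q) τ := by
  rw [jtheta, jacobiTheta₂, ← tsum_mul_left]
  refine tsum_congr fun n ↦ ?_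
  rw [jacobiTheta₂_term, e, e, ← exp_add]
  congr 1
  ring

lemma thetaN_eq_zero_iff {N : ℕ} (hN : 0 < N) (k : ℝ) (z : ℂ) {τ : ℂ} (hτ : 0 < τ.im) :
    thetaN N k z τ = 0 ↔
      ∃ m n : ℤ, z = (2 * m + 1 - N) / (2 * N) + (k / N) * τ + n * τ := by
  have hN0 : (N : ℂ) ≠ 0 := Nat.cast_ne_zero.mpr hN.ne'
  have hNτ : 0 < ((N : ℂ) * τ).im := by simpa using mul_pos (Nat.cast_pos.mpr hN) hτ
  rw [thetaN, jtheta_eq_mul_jacobiTheta₂, mul_eq_zero, jacobiTheta₂_eq_zero_iff hNτ]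
  simp only [e, exp_ne_zero, false_or]
  refine exists₂_congr fun m n ↦ ?_
  rw [← mul_right_inj' hN0 (b := z),
    show (N : ℂ) * ((2 * m + 1 - N) / (2 * N) + (k / N) * τ + n * τ) =
      (2 * m + 1 - N) / 2 + k * τ + n * (N * τ) by field_simp,
    show (N : ℂ) * z + ((1 / 2 - k / N : ℝ) : ℂ) * (N * τ) + ((N / 2 : ℝ) : ℂ) =
      N * z + N * τ / 2 - k * τ + N / 2 by push_cast; field_simp; ring]
  constructor <;> intro h <;> linear_combination h

/-- Lemma: the zero set of `z ↦ θ_k^{(N)}(z,τ)`. -/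
theorem thetaN_zero_set (N : ℕ) (hN : 0 < N) (k : ℤ) (τ : ℍ) :
    (Odd N → {z : ℂ | thetaN N (k : ℝ) z τ = 0} =
      {z : ℂ | ∃ m n : ℤ, z = (m : ℂ) / N + ((k : ℂ) / N) * τ + n * τ}) ∧
    (Even N → {z : ℂ | thetaN N (k : ℝ) z τ = 0} =
      {z : ℂ | ∃ m n : ℤ, z = 1 / (2 * N) + (m : ℂ) / N + ((k : ℂ) / N) * τ + n * τ}) := by
  refine ⟨fun ⟨l, hl⟩ ↦ ?_, fun ⟨l, hl⟩ ↦ ?_⟩ <;>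
    refine Set.ext fun z ↦ (thetaN_eq_zero_iff hN _ z τ.im_pos).trans ⟨?_, ?_⟩ <;>
    rintro ⟨m, n, rfl⟩ <;> rw [hl]
  · exact ⟨m - l, n, by push_cast; field_simp; ring⟩
  · exact ⟨m + l, n, by push_cast; field_simp; ring⟩
  · exact ⟨m - l, n, by push_cast; field_simp; ring⟩
  · exact ⟨m + l, n, by push_cast; field_simp; ring⟩
end

section
/- Fix a positive integer N and τ ∈ ℍ. The N functions z ↦ θ_0^{(N)}(z,τ), z ↦ θ_1^{(N)}(z,τ), …, z ↦ θ_{N−1}^{(N)}(z,τ) from ℂ to ℂ are linearly independent over ℂ. -/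
open scoped UpperHalfPlane

lemma e_add (a b : ℂ) : e (a + b) = e a * e b := by
  rw [e, e, e, ← Complex.exp_add]
  ring_nf

lemma e_int (n : ℤ) : e n = 1 := by
  rw [e, (by ring :
    2 * (Real.pi : ℂ) * Complex.I * n = n * (2 * Real.pi * Complex.I))]
  exact Complex.exp_int_mul_two_pi_mul_I n

lemma e_ne_zero (a : ℂ) : e a ≠ 0 := Complex.exp_ne_zero _

open MeasureTheory in
/-- The two-variable Jacobi theta function is not identically zero on the real line. -/
lemma exists_jacobiTheta₂_ne_zero (τ : ℂ) (hτ : 0 < τ.im) :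
    ∃ s : ℝ, jacobiTheta₂ (s : ℂ) τ ≠ 0 := by
  by_contra h
  push_neg at h
  -- Each term, restricted to real `s`, is integrable on `Ioc 0 1`.
  have hcont : ∀ n : ℤ, Continuous (fun s : ℝ => jacobiTheta₂_term n (s : ℂ) τ) := by
    intro n
    unfold jacobiTheta₂_term
    fun_prop
  have hint : ∀ n : ℤ, IntegrableOn (fun s : ℝ => jacobiTheta₂_term n (s : ℂ) τ)
      (Set.Ioc (0 : ℝ) 1) volume := fun n => (hcont n).integrableOn_Ioc
  have hnorm : ∀ (n : ℤ) (s : ℝ), ‖jacobiTheta₂_term n (s : ℂ) τ‖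
      = Real.exp (-Real.pi * n ^ 2 * τ.im) := by
    intro n s
    rw [norm_jacobiTheta₂_term]
    simp
  have hsum0 : Summable fun n : ℤ => ‖jacobiTheta₂_term n (0 : ℂ) τ‖ :=
    summable_norm_iff.mpr ((summable_jacobiTheta₂_term_iff 0 τ).mpr hτ)
  have hsum : Summable fun n : ℤ =>
      ∫ s in Set.Ioc (0 : ℝ) 1, ‖jacobiTheta₂_term n (s : ℂ) τ‖ := by
    have : ∀ n : ℤ, (∫ s in Set.Ioc (0 : ℝ) 1, ‖jacobiTheta₂_term n (s : ℂ) τ‖)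
        = Real.exp (-Real.pi * n ^ 2 * τ.im) := by
      intro n
      simp_rw [hnorm n]
      rw [setIntegral_const]
      simp
    have heq : ∀ n : ℤ, (∫ s in Set.Ioc (0 : ℝ) 1, ‖jacobiTheta₂_term n (s : ℂ) τ‖)
        = ‖jacobiTheta₂_term n (0 : ℂ) τ‖ := by
      intro n
      rw [this n, norm_jacobiTheta₂_term]
      simp
    exact hsum0.congr fun n => (heq n).symm
  -- Swap sum and integral.
  have hswap : (∑' n : ℤ, ∫ s in Set.Ioc (0 : ℝ) 1, jacobiTheta₂_term n (s : ℂ) τ)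
      = ∫ s in Set.Ioc (0 : ℝ) 1, jacobiTheta₂ (s : ℂ) τ := by
    unfold jacobiTheta₂
    exact integral_tsum_of_summable_integral_norm hint hsum
  -- Each individual integral: `1` for `n = 0`, `0` otherwise.
  have hterm : ∀ n : ℤ, (∫ s in Set.Ioc (0 : ℝ) 1, jacobiTheta₂_term n (s : ℂ) τ)
      = if n = 0 then 1 else 0 := by
    intro n
    have hrw : ∀ s : ℝ, jacobiTheta₂_term n (s : ℂ) τ
        = Complex.exp (Real.pi * Complex.I * n ^ 2 * τ) *
          Complex.exp ((2 * Real.pi * Complex.I * n) * (s : ℂ)) := by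
      intro s
      rw [jacobiTheta₂_term, ← Complex.exp_add]
      ring_nf
    simp_rw [hrw]
    rw [MeasureTheory.integral_const_mul]
    rcases eq_or_ne n 0 with hn | hn
    · subst hn
      simp
    · rw [if_neg hn]
      have hc : (2 * Real.pi * Complex.I * n) ≠ 0 := by
        simp [Real.pi_ne_zero, Complex.I_ne_zero, hn]
      have : (∫ s in Set.Ioc (0 : ℝ) 1,
          Complex.exp ((2 * Real.pi * Complex.I * n) * (s : ℂ)))
          = ∫ s in (0:ℝ)..1, Complex.exp ((2 * Real.pi * Complex.I * n) * (s : ℂ)) := by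
        rw [intervalIntegral.integral_of_le (by norm_num)]
      rw [this, integral_exp_mul_complex hc]
      have h1 : Complex.exp (2 * Real.pi * Complex.I * n * ((1:ℝ) : ℂ)) = 1 := by
        rw [(by push_cast; ring : 2 * (Real.pi:ℂ) * Complex.I * n * ((1:ℝ):ℂ)
          = n * (2 * Real.pi * Complex.I))]
        exact Complex.exp_int_mul_two_pi_mul_I n
      rw [h1]
      simp
  -- Sum of the individual integrals is `1`.
  have hone : (∑' n : ℤ, ∫ s in Set.Ioc (0 : ℝ) 1, jacobiTheta₂_term n (s : ℂ) τ) = 1 := by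
    simp_rw [hterm]
    rw [tsum_eq_single 0 (fun n hn => if_neg hn)]
    simp
  rw [hswap] at hone
  simp_rw [h] at hone
  simp at hone

/-- Factorization of `jtheta` along a suitable real line in terms of `jacobiTheta₂`. -/
lemma jtheta_eq_jacobiTheta₂ (p q : ℝ) (t : ℂ) (s : ℝ) :
    jtheta p q (-(p : ℂ) * t + (s : ℂ) - (q : ℂ)) t
      = e (-(1 / 2 : ℂ) * (p : ℂ) ^ 2 * t + (p : ℂ) * (s : ℂ)) * jacobiTheta₂ (s : ℂ) t := by
  rw [jtheta, jacobiTheta₂, ← tsum_mul_left]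
  refine tsum_congr fun n => ?_
  have harg : (1 / 2 : ℂ) * ((n : ℂ) + p) ^ 2 * t + ((n : ℂ) + p) * (-(p : ℂ) * t + s - q + q)
      = (-(1 / 2 : ℂ) * (p : ℂ) ^ 2 * t + (p : ℂ) * s)
        + ((1 / 2 : ℂ) * (n : ℂ) ^ 2 * t + (n : ℂ) * s) := by ring
  rw [harg, e_add]
  congr 1
  rw [jacobiTheta₂_term, e]
  congr 1
  ring

/-- The function `z ↦ θ_k^{(N)}(z, τ)` is not identically zero. -/
lemma thetaN_ne_zero (N : ℕ) (hN : 0 < N) (k : ℝ) (τ : ℂ) (hτ : 0 < τ.im) :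
    (fun z : ℂ => thetaN N k z τ) ≠ 0 := by
  set p : ℝ := 1 / 2 - k / N with hp
  set q : ℝ := N / 2 with hq
  set t : ℂ := N * τ with ht
  have htim : 0 < t.im := by
    rw [ht]
    have : ((N : ℂ) * τ).im = N * τ.im := by
      simp [Complex.mul_im]
    rw [this]
    positivity
  obtain ⟨s, hs⟩ := exists_jacobiTheta₂_ne_zero t htim
  have hNne : (N : ℂ) ≠ 0 := by exact_mod_cast hN.ne'
  intro hcontra
  have hz := congrFun hcontra ((-(p : ℂ) * t + (s : ℂ) - (q : ℂ)) / N)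
  rw [thetaN] at hz
  rw [mul_div_cancel₀ _ hNne] at hz
  rw [← ht, jtheta_eq_jacobiTheta₂ p q t s] at hz
  exact (mul_ne_zero (e_ne_zero _) hs) hz

/-- Quasi-periodicity of `jtheta` under `z ↦ z + 1`. -/
lemma jtheta_add_one (p q : ℝ) (w t : ℂ) :
    jtheta p q (w + 1) t = e (p : ℂ) * jtheta p q w t := by
  rw [jtheta, jtheta, ← tsum_mul_left]
  refine tsum_congr fun n => ?_
  have harg : (1 / 2 : ℂ) * ((n : ℂ) + p) ^ 2 * t + ((n : ℂ) + p) * (w + 1 + q)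
      = ((p : ℂ) + (n : ℂ))
        + ((1 / 2 : ℂ) * ((n : ℂ) + p) ^ 2 * t + ((n : ℂ) + p) * (w + q)) := by ring
  rw [harg, e_add, e_add, e_int, mul_one]

/-- The shift `z ↦ z + 1/N` multiplies `θ_k^{(N)}` by `e(1/2 - k/N)`. -/
lemma thetaN_shift (N : ℕ) (hN : 0 < N) (k : ℝ) (z τ : ℂ) :
    thetaN N k (z + 1 / N) τ = e (((1 / 2 - k / N : ℝ)) : ℂ) * thetaN N k z τ := by
  have hNne : (N : ℂ) ≠ 0 := by exact_mod_cast hN.ne'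
  have hNz : (N : ℂ) * (z + 1 / N) = (N : ℂ) * z + 1 := by
    field_simp
  rw [thetaN, hNz, jtheta_add_one, thetaN]

/-- The shift operator `f ↦ (z ↦ f (z + c))` as a linear endomorphism of `ℂ → ℂ`. -/
def shiftOp (c : ℂ) : (ℂ → ℂ) →ₗ[ℂ] (ℂ → ℂ) where
  toFun f := fun z => f (z + c)
  map_add' _ _ := rfl
  map_smul' _ _ := rfl

/-- Lemma: `θ_0^{(N)}(·,τ), …, θ_{N-1}^{(N)}(·,τ)` are linearly independent over `ℂ`. -/
theorem thetaN_linearIndependent (N : ℕ) (hN : 0 < N) (τ : ℍ) :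
    LinearIndependent ℂ (fun k : Fin N => fun z : ℂ => thetaN N ((k : ℕ) : ℝ) z τ) := by
  set μ : Fin N → ℂ := fun k => e (((1 / 2 - ((k : ℕ) : ℝ) / N : ℝ)) : ℂ) with hμ
  have hμinj : Function.Injective μ := by
    intro k k' hkk'
    simp only [hμ, e] at hkk'
    rw [Complex.exp_eq_exp_iff_exists_int] at hkk'
    obtain ⟨m, hm⟩ := hkk'
    have hNR : (0 : ℝ) < N := by exact_mod_cast hN
    have hne : (2 * (Real.pi : ℂ) * Complex.I) ≠ 0 := by
      simp [Real.pi_ne_zero, Complex.I_ne_zero]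
    have h2 : (((1 / 2 - ((k : ℕ) : ℝ) / N : ℝ)) : ℂ)
        = (((1 / 2 - ((k' : ℕ) : ℝ) / N : ℝ)) : ℂ) + m := by
      apply mul_left_cancel₀ hne
      rw [hm]
      ring
    have h3 : (1 / 2 - ((k : ℕ) : ℝ) / N) = (1 / 2 - ((k' : ℕ) : ℝ) / N) + m := by
      exact_mod_cast h2
    have hN0 : (N : ℝ) ≠ 0 := ne_of_gt hNR
    have hstep : ((k' : ℕ) : ℝ) / N = ((k : ℕ) : ℝ) / N + m := by linarith
    have h4 : ((k' : ℕ) : ℝ) = ((k : ℕ) : ℝ) + m * N := by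
      field_simp at hstep
      linarith
    have h5 : ((k' : ℕ) : ℤ) = ((k : ℕ) : ℤ) + m * N := by exact_mod_cast h4
    have hkN : ((k : ℕ) : ℤ) < N := by exact_mod_cast k.isLt
    have hk'N : ((k' : ℕ) : ℤ) < N := by exact_mod_cast k'.isLt
    have hk0 : (0 : ℤ) ≤ ((k : ℕ) : ℤ) := Int.ofNat_nonneg _
    have hk'0 : (0 : ℤ) ≤ ((k' : ℕ) : ℤ) := Int.ofNat_nonneg _
    have hNZ : (0 : ℤ) < N := by exact_mod_cast hN
    have hm0 : m = 0 := by
      rcases lt_trichotomy m 0 with h | h | h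
      · have : m * N ≤ -1 * N := mul_le_mul_of_nonneg_right (by omega) hNZ.le
        linarith
      · exact h
      · have : 1 * (N : ℤ) ≤ m * N := mul_le_mul_of_nonneg_right (by omega) hNZ.le
        linarith
    rw [hm0] at h5
    simp at h5
    exact Fin.ext (by exact_mod_cast h5.symm)
  refine Module.End.eigenvectors_linearIndependent' (shiftOp (1 / N)) μ hμinj _ fun k => ?_
  rw [Module.End.hasEigenvector_iff]
  constructor
  · rw [Module.End.mem_eigenspace_iff]
    funext z
    show thetaN N ((k : ℕ) : ℝ) (z + 1 / N) τ = _
    rw [thetaN_shift N hN _ z τ]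
    rfl
  · exact thetaN_ne_zero N hN _ τ τ.2
end

section
/- (Jacobi's identity) Let τ ∈ ℍ and let w, x, y, z be complex numbers. Set w' = (w+x+y+z)/2, x' = (w+x−y−z)/2, y' = (w−x+y−z)/2, z' = (w−x−y+z)/2. Then ϑ₃(w)ϑ₃(x)ϑ₃(y)ϑ₃(z) + ϑ₂(w)ϑ₂(x)ϑ₂(y)ϑ₂(z) = ϑ₃(w')ϑ₃(x')ϑ₃(y')ϑ₃(z') + ϑ₂(w')ϑ₂(x')ϑ₂(y')ϑ₂(z'). -/
open scoped UpperHalfPlane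

/-- Jacobi's basic theta function `ϑ₀(z) = θ_{(0,1/2)}(z,τ)`. -/
noncomputable def jTheta0 (z τ : ℂ) : ℂ := jtheta 0 (1 / 2) z τ

/-- Jacobi's basic theta function `ϑ₁(z) = θ_{(1/2,1/2)}(z,τ)`. -/
noncomputable def jTheta1 (z τ : ℂ) : ℂ := jtheta (1 / 2) (1 / 2) z τ

/-- Jacobi's basic theta function `ϑ₂(z) = θ_{(1/2,0)}(z,τ)`. -/
noncomputable def jTheta2 (z τ : ℂ) : ℂ := jtheta (1 / 2) 0 z τ

/-- Jacobi's basic theta function `ϑ₃(z) = θ_{(0,0)}(z,τ)`. -/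
noncomputable def jTheta3 (z τ : ℂ) : ℂ := jtheta 0 0 z τ

/- ### Auxiliary material for the proof of Jacobi's identity -/

namespace JacobiAux

open Complex

/-- A single term of the theta series (with `q = 0`). -/
noncomputable def T (τ : ℂ) (p : ℝ) (u : ℂ) (n : ℤ) : ℂ :=
  e ((1 / 2 : ℂ) * ((n : ℂ) + p) ^ 2 * τ + ((n : ℂ) + p) * u)

lemma jtheta_eq (p : ℝ) (u τ : ℂ) : jtheta p 0 u τ = ∑' n : ℤ, T τ p u n := by
  simp [jtheta, T]

lemma T_eq (τ : ℂ) (p : ℝ) (u : ℂ) (n : ℤ) :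
    T τ p u n = jacobiTheta₂_term n (u + p * τ) τ *
      e ((1 / 2 : ℂ) * (p : ℂ) ^ 2 * τ + (p : ℂ) * u) := by
  simp only [T, e, jacobiTheta₂_term, ← Complex.exp_add]
  congr 1
  ring

lemma summable_norm_jt (z τ : ℂ) (hτ : 0 < τ.im) :
    Summable fun n : ℤ => ‖jacobiTheta₂_term n z τ‖ := by
  refine Summable.of_nonneg_of_le (fun _ => norm_nonneg _)
    (fun n => norm_jacobiTheta₂_term_le hτ (le_refl |z.im|) le_rfl n) ?_
  simpa using summable_pow_mul_jacobiTheta₂_term_bound |z.im| hτ 0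

lemma summable_norm_T (τ : ℂ) (hτ : 0 < τ.im) (p : ℝ) (u : ℂ) :
    Summable fun n : ℤ => ‖T τ p u n‖ := by
  have := (summable_norm_jt (u + p * τ) τ hτ).mul_right
    ‖e ((1 / 2 : ℂ) * (p : ℂ) ^ 2 * τ + (p : ℂ) * u)‖
  refine this.congr fun n => ?_
  rw [T_eq, norm_mul]

/-- Product of four theta series as a sum over `ℤ⁴`. -/
lemma prod4 (τ : ℂ) (hτ : 0 < τ.im) (p : ℝ) (u1 u2 u3 u4 : ℂ) :
    jtheta p 0 u1 τ * jtheta p 0 u2 τ * jtheta p 0 u3 τ * jtheta p 0 u4 τ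
      = ∑' v : ℤ × ℤ × ℤ × ℤ,
          T τ p u1 v.1 * (T τ p u2 v.2.1 * (T τ p u3 v.2.2.1 * T τ p u4 v.2.2.2)) := by
  have h1 := summable_norm_T τ hτ p u1
  have h2 := summable_norm_T τ hτ p u2
  have h3 := summable_norm_T τ hτ p u3
  have h4 := summable_norm_T τ hτ p u4
  rw [jtheta_eq, jtheta_eq, jtheta_eq, jtheta_eq, mul_assoc, mul_assoc,
    tsum_mul_tsum_of_summable_norm h3 h4,
    tsum_mul_tsum_of_summable_norm h2 (h3.mul_norm h4),
    tsum_mul_tsum_of_summable_norm h1 (h2.mul_norm (h3.mul_norm h4))]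

lemma summable_prod4 (τ : ℂ) (hτ : 0 < τ.im) (p : ℝ) (u1 u2 u3 u4 : ℂ) :
    Summable fun v : ℤ × ℤ × ℤ × ℤ =>
      T τ p u1 v.1 * (T τ p u2 v.2.1 * (T τ p u3 v.2.2.1 * T τ p u4 v.2.2.2)) :=
  (((summable_norm_T τ hτ p u1).mul_norm (((summable_norm_T τ hτ p u2)).mul_norm
    (((summable_norm_T τ hτ p u3)).mul_norm (summable_norm_T τ hτ p u4))))).of_norm

lemma tsum_sum_type {α β : Type*} {f : α ⊕ β → ℂ} (hf : Summable f) :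
    ∑' x, f x = (∑' a, f (Sum.inl a)) + ∑' b, f (Sum.inr b) := by
  have h1 : Summable (f ∘ Sum.inl) := hf.comp_injective Sum.inl_injective
  have h2 : Summable (f ∘ Sum.inr) := hf.comp_injective Sum.inr_injective
  have k1 : HasSum (f ∘ ((↑) : Set.range (Sum.inl : α → α ⊕ β) → α ⊕ β))
      (∑' a, f (Sum.inl a)) :=
    (Equiv.ofInjective (Sum.inl : α → α ⊕ β) Sum.inl_injective).hasSum_iff.mp h1.hasSum
  have k2 : HasSum (f ∘ ((↑) : Set.range (Sum.inr : β → α ⊕ β) → α ⊕ β))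
      (∑' b, f (Sum.inr b)) :=
    (Equiv.ofInjective (Sum.inr : β → α ⊕ β) Sum.inr_injective).hasSum_iff.mp h2.hasSum
  exact (k1.add_isCompl Set.isCompl_range_inl_range_inr k2).tsum_eq

/-- Parametrization of even-coordinate-sum integer quadruples. -/
def ψ₀ : ℤ × ℤ × ℤ × ℤ → ℤ × ℤ × ℤ × ℤ := fun v =>
  (2 * v.1 - v.2.1 - v.2.2.1 - v.2.2.2, v.2.1, v.2.2.1, v.2.2.2)

/-- Parametrization of odd-coordinate-sum integer quadruples. -/
def ψ₁ : ℤ × ℤ × ℤ × ℤ → ℤ × ℤ × ℤ × ℤ := fun v =>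
  (2 * v.1 + 1 - v.2.1 - v.2.2.1 - v.2.2.2, v.2.1, v.2.2.1, v.2.2.2)

/-- The Hadamard involution in parametrized coordinates. -/
def χ : ℤ × ℤ × ℤ × ℤ → ℤ × ℤ × ℤ × ℤ := fun v =>
  (2 * v.1 - v.2.1 - v.2.2.1 - v.2.2.2, v.1 - v.2.2.1 - v.2.2.2,
    v.1 - v.2.1 - v.2.2.2, v.1 - v.2.1 - v.2.2.1)

lemma χ_invol : Function.Involutive χ := by
  rintro ⟨k, b, c, d⟩
  simp only [χ, Prod.mk.injEq]
  refine ⟨by ring, by ring, by ring, by ring⟩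

/-- `χ` as a permutation. -/
def χe : Equiv.Perm (ℤ × ℤ × ℤ × ℤ) := χ_invol.toPerm

/-- Splitting `ℤ⁴` into even and odd coordinate sums. -/
def E : (ℤ × ℤ × ℤ × ℤ) ⊕ (ℤ × ℤ × ℤ × ℤ) ≃ ℤ × ℤ × ℤ × ℤ where
  toFun := Sum.elim ψ₀ ψ₁
  invFun := fun v =>
    if (v.1 + v.2.1 + v.2.2.1 + v.2.2.2) % 2 = 0 then
      Sum.inl ((v.1 + v.2.1 + v.2.2.1 + v.2.2.2) / 2, v.2.1, v.2.2.1, v.2.2.2)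
    else
      Sum.inr ((v.1 + v.2.1 + v.2.2.1 + v.2.2.2 - 1) / 2, v.2.1, v.2.2.1, v.2.2.2)
  left_inv := by
    rintro (⟨k, b, c, d⟩ | ⟨k, b, c, d⟩) <;>
        dsimp only [Sum.elim_inl, Sum.elim_inr, ψ₀, ψ₁] <;> split_ifs with h
    · simp only [Sum.inl.injEq, Prod.mk.injEq, and_true, true_and]
      omega
    · exact absurd (by omega) h
    · exact absurd h (by omega)
    · simp only [Sum.inr.injEq, Prod.mk.injEq, and_true, true_and]
      omega
  right_inv := by
    rintro ⟨a, b, c, d⟩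
    dsimp only
    split_ifs with h
    · simp only [Sum.elim_inl, ψ₀, Prod.mk.injEq, and_true, true_and]
      omega
    · simp only [Sum.elim_inr, ψ₁, Prod.mk.injEq, and_true, true_and]
      omega

lemma tsum_split (f : ℤ × ℤ × ℤ × ℤ → ℂ) (hf : Summable f) :
    ∑' v, f v = (∑' v, f (ψ₀ v)) + ∑' v, f (ψ₁ v) := by
  have h := tsum_sum_type (f := fun c => f (E c)) (E.summable_iff.mpr hf)
  rw [← Equiv.tsum_eq E f, h]
  simp only [E, Equiv.coe_fn_mk, Sum.elim_inl, Sum.elim_inr]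

lemma tsum_reindex (f : ℤ × ℤ × ℤ × ℤ → ℂ) : ∑' v, f (χ v) = ∑' v, f v :=
  χe.tsum_eq f

end JacobiAux

/-- Jacobi's identity (Proposition 7.2). -/
theorem jacobi_identity (τ : ℍ) (w x y z w' x' y' z' : ℂ)
    (hw' : w' = (w + x + y + z) / 2) (hx' : x' = (w + x - y - z) / 2)
    (hy' : y' = (w - x + y - z) / 2) (hz' : z' = (w - x - y + z) / 2) :
    jTheta3 w τ * jTheta3 x τ * jTheta3 y τ * jTheta3 z τ
      + jTheta2 w τ * jTheta2 x τ * jTheta2 y τ * jTheta2 z τ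
    = jTheta3 w' τ * jTheta3 x' τ * jTheta3 y' τ * jTheta3 z' τ
      + jTheta2 w' τ * jTheta2 x' τ * jTheta2 y' τ * jTheta2 z' τ := by
  subst hw' hx' hy' hz'
  open JacobiAux in
  have ht : 0 < (τ : ℂ).im := τ.2
  set t : ℂ := (τ : ℂ)
  -- the four quadruple products as `ℤ⁴`-sums
  simp only [jTheta3, jTheta2]
  rw [JacobiAux.prod4 t ht 0 w x y z,
    JacobiAux.prod4 t ht (1/2) w x y z,
    JacobiAux.prod4 t ht 0 ((w+x+y+z)/2) ((w+x-y-z)/2) ((w-x+y-z)/2) ((w-x-y+z)/2),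
    JacobiAux.prod4 t ht (1/2) ((w+x+y+z)/2) ((w+x-y-z)/2) ((w-x+y-z)/2) ((w-x-y+z)/2)]
  set F3 : ℤ × ℤ × ℤ × ℤ → ℂ := fun v =>
    JacobiAux.T t 0 w v.1 * (JacobiAux.T t 0 x v.2.1 *
      (JacobiAux.T t 0 y v.2.2.1 * JacobiAux.T t 0 z v.2.2.2)) with hF3
  set F2 : ℤ × ℤ × ℤ × ℤ → ℂ := fun v =>
    JacobiAux.T t (1/2) w v.1 * (JacobiAux.T t (1/2) x v.2.1 *
      (JacobiAux.T t (1/2) y v.2.2.1 * JacobiAux.T t (1/2) z v.2.2.2)) with hF2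
  set G3 : ℤ × ℤ × ℤ × ℤ → ℂ := fun v =>
    JacobiAux.T t 0 ((w+x+y+z)/2) v.1 * (JacobiAux.T t 0 ((w+x-y-z)/2) v.2.1 *
      (JacobiAux.T t 0 ((w-x+y-z)/2) v.2.2.1 * JacobiAux.T t 0 ((w-x-y+z)/2) v.2.2.2)) with hG3
  set G2 : ℤ × ℤ × ℤ × ℤ → ℂ := fun v =>
    JacobiAux.T t (1/2) ((w+x+y+z)/2) v.1 * (JacobiAux.T t (1/2) ((w+x-y-z)/2) v.2.1 *
      (JacobiAux.T t (1/2) ((w-x+y-z)/2) v.2.2.1 *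
        JacobiAux.T t (1/2) ((w-x-y+z)/2) v.2.2.2)) with hG2
  have sF3 : Summable F3 := JacobiAux.summable_prod4 t ht 0 w x y z
  have sF2 : Summable F2 := JacobiAux.summable_prod4 t ht (1/2) w x y z
  have sG3 : Summable G3 := JacobiAux.summable_prod4 t ht 0 _ _ _ _
  have sG2 : Summable G2 := JacobiAux.summable_prod4 t ht (1/2) _ _ _ _
  rw [JacobiAux.tsum_split F3 sF3, JacobiAux.tsum_split F2 sF2,
    JacobiAux.tsum_split G3 sG3, JacobiAux.tsum_split G2 sG2]
  -- key pointwise identities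
  have key : ∀ v : ℤ × ℤ × ℤ × ℤ,
      F3 (JacobiAux.ψ₀ v) = G3 (JacobiAux.ψ₀ (JacobiAux.χ v)) ∧
      F3 (JacobiAux.ψ₁ v) = G2 (JacobiAux.ψ₀ (JacobiAux.χ v)) ∧
      F2 (JacobiAux.ψ₀ v) = G3 (JacobiAux.ψ₁ (JacobiAux.χ v)) ∧
      F2 (JacobiAux.ψ₁ v) = G2 (JacobiAux.ψ₁ (JacobiAux.χ v)) := by
    rintro ⟨k, b, c, d⟩
    simp only [hF3, hF2, hG3, hG2, JacobiAux.ψ₀, JacobiAux.ψ₁, JacobiAux.χ, JacobiAux.T, e,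
      ← Complex.exp_add]
    refine ⟨?_, ?_, ?_, ?_⟩ <;> · congr 1; push_cast; ring
  have e1 : ∑' v, F3 (JacobiAux.ψ₀ v) = ∑' v, G3 (JacobiAux.ψ₀ v) := by
    rw [← JacobiAux.tsum_reindex (fun v => G3 (JacobiAux.ψ₀ v))]
    exact tsum_congr fun v => (key v).1
  have e2 : ∑' v, F3 (JacobiAux.ψ₁ v) = ∑' v, G2 (JacobiAux.ψ₀ v) := by
    rw [← JacobiAux.tsum_reindex (fun v => G2 (JacobiAux.ψ₀ v))]
    exact tsum_congr fun v => (key v).2.1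
  have e3 : ∑' v, F2 (JacobiAux.ψ₀ v) = ∑' v, G3 (JacobiAux.ψ₁ v) := by
    rw [← JacobiAux.tsum_reindex (fun v => G3 (JacobiAux.ψ₁ v))]
    exact tsum_congr fun v => (key v).2.2.1
  have e4 : ∑' v, F2 (JacobiAux.ψ₁ v) = ∑' v, G2 (JacobiAux.ψ₁ v) := by
    rw [← JacobiAux.tsum_reindex (fun v => G2 (JacobiAux.ψ₁ v))]
    exact tsum_congr fun v => (key v).2.2.2
  rw [e1, e2, e3, e4]
  ring
end

section
/- Let τ ∈ ℍ and set a_k := θ_k^{(8)}(0, τ) for k = 0, 1, 2, 3, 4. Then the following six quartic relations hold: (1) a_0·a_4·(a_0² + a_4²) = 2·a_2⁴; (2) a_0·a_4·(a_1² + a_3²) = 2·a_1·a_3·a_2²; (3) a_0·a_2·a_4·(a_0 + a_4) = 2·a_1²·a_3²; (4) a_2³·(a_0 + a_4) = a_1·a_3·(a_1² + a_3²); (5) a_1·a_3·(a_0² + a_4²) = a_2²·(a_1² + a_3²); (6) a_2·(a_0³ + a_4³) = a_1⁴ + a_3⁴. -/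
open scoped UpperHalfPlane

/-- `θ_i^{(N)}(z,τ)` with integer index `i` (read modulo `N`). -/
noncomputable def thN (N : ℕ) (τ : ℍ) (i : ℤ) (z : ℂ) : ℂ := thetaN N (i : ℝ) z τ

/-- The theta null values `a_i = θ_i^{(N)}(0,τ)` with integer index `i` (read modulo `N`). -/
noncomputable def aN (N : ℕ) (τ : ℍ) (i : ℤ) : ℂ := thetaN N (i : ℝ) 0 τ

/-! ### Auxiliary definitions and lemmas -/

/-- `Wq τ k = exp (π i τ k / 16)`. -/
noncomputable def Wq (τ : ℍ) (k : ℤ) : ℂ :=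
  Complex.exp (Real.pi * Complex.I * (τ : ℂ) * k / 16)

lemma Wq_add (τ : ℍ) (a b : ℤ) : Wq τ (a + b) = Wq τ a * Wq τ b := by
  rw [Wq, Wq, Wq, ← Complex.exp_add]
  congr 1
  push_cast
  ring

lemma summable_Wq (τ : ℍ) {c : ℤ} (hc : 0 < c) :
    Summable fun m : ℤ => Wq τ (c * m ^ 2) := by
  have hc' : (0 : ℝ) < (c : ℝ) / 16 := by
    have : (0 : ℝ) < (c : ℝ) := by exact_mod_cast hc
    positivity
  have him : 0 < ((((c : ℝ) / 16 : ℝ) : ℂ) * (τ : ℂ)).im := by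
    rw [Complex.im_ofReal_mul]
    exact mul_pos hc' τ.2
  have h := (summable_jacobiTheta₂_term_iff 0 ((((c : ℝ) / 16 : ℝ) : ℂ) * (τ : ℂ))).mpr him
  refine h.congr fun m => ?_
  rw [jacobiTheta₂_term, Wq]
  congr 1
  push_cast
  ring

lemma summable_norm_Wq (τ : ℍ) {c : ℤ} (hc : 0 < c) :
    Summable fun m : ℤ => ‖Wq τ (c * m ^ 2)‖ :=
  summable_norm_iff.mpr (summable_Wq τ hc)

lemma summable_norm_FFt (τ : ℍ) (r : ℤ) :
    Summable fun n : ℤ => ‖Wq τ (2 * (8 * n + r) ^ 2)‖ := by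
  have h := (summable_norm_Wq τ (c := 2) (by norm_num)).comp_injective
    (i := fun n : ℤ => 8 * n + r) (fun a b hab => by dsimp only at hab; omega)
  exact h

lemma summable_norm_BBt (τ : ℍ) (j : ℤ) :
    Summable fun n : ℤ => ‖Wq τ ((16 * n + j) ^ 2)‖ := by
  have h := (summable_norm_Wq τ (c := 1) (by norm_num)).comp_injective
    (i := fun n : ℤ => 16 * n + j) (fun a b hab => by dsimp only at hab; omega)
  refine h.congr fun n => ?_
  simp only [Function.comp_apply, one_mul]

/-- `FF τ r = ∑_{m ≡ r mod 8} q^{2 m²}` with `q = exp(π i τ/16)`. -/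
noncomputable def FF (τ : ℍ) (r : ℤ) : ℂ := ∑' n : ℤ, Wq τ (2 * (8 * n + r) ^ 2)

/-- `BB τ j = ∑_{m ≡ j mod 16} q^{m²}` with `q = exp(π i τ/16)`. -/
noncomputable def BB (τ : ℍ) (j : ℤ) : ℂ := ∑' n : ℤ, Wq τ ((16 * n + j) ^ 2)

lemma BB_per (τ : ℍ) (j : ℤ) : BB τ (j + 16) = BB τ j := by
  rw [BB, BB, ← (Equiv.addRight (1 : ℤ)).tsum_eq (fun n => Wq τ ((16 * n + j) ^ 2))]
  refine tsum_congr fun n => ?_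
  simp only [Equiv.coe_addRight]
  congr 1
  ring

lemma BB_neg (τ : ℍ) (j : ℤ) : BB τ (-j) = BB τ j := by
  rw [BB, BB, ← (Equiv.neg ℤ).tsum_eq (fun n => Wq τ ((16 * n + j) ^ 2))]
  refine tsum_congr fun n => ?_
  simp only [Equiv.neg_apply]
  congr 1
  ring

/-- The reindexing bijection `Bool × ℤ² ≃ ℤ²` sending `(b,U,V)` to
`(U+V+b, U-V)` (with `b = 0` or `1`). -/
def pairEquiv : Bool × ℤ × ℤ ≃ ℤ × ℤ where
  toFun q := (q.2.1 + q.2.2 + cond q.1 1 0, q.2.1 - q.2.2)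
  invFun p := (((p.1 + p.2) % 2 == 1),
    ((p.1 + p.2) - (p.1 + p.2) % 2) / 2, ((p.1 - p.2) - (p.1 + p.2) % 2) / 2)
  left_inv := by
    rintro ⟨b, U, V⟩
    cases b <;>
      refine Prod.ext ?_ (Prod.ext ?_ ?_) <;>
      simp <;> omega
  right_inv := by
    rintro ⟨m, n⟩
    have h2 : (m + n) % 2 = 0 ∨ (m + n) % 2 = 1 := by omega
    rcases h2 with h | h <;>
      refine Prod.ext ?_ ?_ <;>
      simp [h] <;> omega

set_option maxHeartbeats 1000000 in
lemma BB_mul (τ : ℍ) (a b : ℤ) :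
    (∑' x : ℤ × ℤ, Wq τ ((16 * x.1 + a) ^ 2 + (16 * x.2 + b) ^ 2)) = BB τ a * BB τ b := by
  rw [BB, BB, tsum_mul_tsum_of_summable_norm (summable_norm_BBt τ a) (summable_norm_BBt τ b)]
  exact tsum_congr fun x => Wq_add τ _ _

set_option maxHeartbeats 1000000 in
lemma FF_mul (τ : ℍ) (r s : ℤ) :
    FF τ r * FF τ s
      = BB τ (r + s) * BB τ (r - s) + BB τ (r + s + 8) * BB τ (r - s + 8) := by
  have hFr := summable_norm_FFt τ r
  have hFs := summable_norm_FFt τ s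
  rw [FF, FF, tsum_mul_tsum_of_summable_norm hFr hFs]
  have h1 : (∑' z : ℤ × ℤ, Wq τ (2 * (8 * z.1 + r) ^ 2) * Wq τ (2 * (8 * z.2 + s) ^ 2))
      = ∑' z : ℤ × ℤ, Wq τ (2 * (8 * z.1 + r) ^ 2 + 2 * (8 * z.2 + s) ^ 2) :=
    tsum_congr fun z => (Wq_add τ _ _).symm
  rw [h1]
  set g : ℤ × ℤ → ℂ := fun z => Wq τ (2 * (8 * z.1 + r) ^ 2 + 2 * (8 * z.2 + s) ^ 2) with hgdef
  have hg : Summable g :=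
    (summable_mul_of_summable_norm hFr hFs).congr fun z => (Wq_add τ _ _).symm
  have hge : Summable fun q : Bool × ℤ × ℤ => g (pairEquiv q) :=
    pairEquiv.summable_iff.mpr hg
  have hfib : ∀ b : Bool, Summable fun x : ℤ × ℤ => g (pairEquiv (b, x)) := fun b =>
    hg.comp_injective fun x y hxy => by
      have := pairEquiv.injective hxy
      exact (Prod.ext_iff.mp this).2
  rw [← pairEquiv.tsum_eq g, Summable.tsum_prod' hge hfib, tsum_bool]
  have e0 : (∑' x : ℤ × ℤ, g (pairEquiv (false, x)))
      = ∑' x : ℤ × ℤ, Wq τ ((16 * x.1 + (r + s)) ^ 2 + (16 * x.2 + (r - s)) ^ 2) := by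
    refine tsum_congr fun x => ?_
    show Wq τ (2 * (8 * (x.1 + x.2 + 0) + r) ^ 2 + 2 * (8 * (x.1 - x.2) + s) ^ 2) = _
    congr 1
    ring
  have e1 : (∑' x : ℤ × ℤ, g (pairEquiv (true, x)))
      = ∑' x : ℤ × ℤ, Wq τ ((16 * x.1 + (r + s + 8)) ^ 2 + (16 * x.2 + (r - s + 8)) ^ 2) := by
    refine tsum_congr fun x => ?_
    show Wq τ (2 * (8 * (x.1 + x.2 + 1) + r) ^ 2 + 2 * (8 * (x.1 - x.2) + s) ^ 2) = _
    congr 1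
    ring
  rw [e0, e1, BB_mul, BB_mul]

lemma aN_eq (τ : ℍ) (k : ℤ) : aN 8 τ k = (-1 : ℂ) ^ k * FF τ (4 - k) := by
  rw [aN, thetaN, jtheta, FF, ← tsum_mul_left]
  refine tsum_congr fun n => ?_
  rw [e, Wq]
  have h1 : 2 * (Real.pi : ℂ) * Complex.I *
      ((1 / 2 : ℂ) * ((n : ℂ) + ((1 / 2 - (k : ℝ) / (8 : ℕ) : ℝ) : ℂ)) ^ 2 * ((8 : ℕ) * (τ : ℂ))
        + ((n : ℂ) + ((1 / 2 - (k : ℝ) / (8 : ℕ) : ℝ) : ℂ)) * (((8 : ℕ) : ℂ) * 0 + (((8 : ℕ) / 2 : ℝ) : ℂ)))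
      = (Real.pi : ℂ) * Complex.I * (τ : ℂ) * ((2 * (8 * n + (4 - k)) ^ 2 : ℤ) : ℂ) / 16
        + ((8 * n + 4 - k : ℤ) : ℂ) * ((Real.pi : ℂ) * Complex.I) := by
    push_cast
    ring
  rw [h1, Complex.exp_add]
  have h2 : Complex.exp (((8 * n + 4 - k : ℤ) : ℂ) * ((Real.pi : ℂ) * Complex.I))
      = (-1 : ℂ) ^ (8 * n + 4 - k) := by
    rw [Complex.exp_int_mul, Complex.exp_pi_mul_I]
  have h3 : (-1 : ℂ) ^ (8 * n + 4 - k) = (-1 : ℂ) ^ k := by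
    rw [show 8 * n + 4 - k = k + 2 * (4 * n + 2 - k) by ring, zpow_add₀ (by norm_num : (-1 : ℂ) ≠ 0),
      zpow_mul]
    norm_num
  rw [h2, h3]
  ring

/-- The six quartic relations satisfied by the theta null values of level 8, defining the
modular curve `X^{(8)}(16)`. -/
theorem modular_curve_level_8 (τ : ℍ) :
    aN 8 τ 0 * aN 8 τ 4 * (aN 8 τ 0 ^ 2 + aN 8 τ 4 ^ 2) = 2 * aN 8 τ 2 ^ 4 ∧
    aN 8 τ 0 * aN 8 τ 4 * (aN 8 τ 1 ^ 2 + aN 8 τ 3 ^ 2)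
      = 2 * aN 8 τ 1 * aN 8 τ 3 * aN 8 τ 2 ^ 2 ∧
    aN 8 τ 0 * aN 8 τ 2 * aN 8 τ 4 * (aN 8 τ 0 + aN 8 τ 4)
      = 2 * aN 8 τ 1 ^ 2 * aN 8 τ 3 ^ 2 ∧
    aN 8 τ 2 ^ 3 * (aN 8 τ 0 + aN 8 τ 4) = aN 8 τ 1 * aN 8 τ 3 * (aN 8 τ 1 ^ 2 + aN 8 τ 3 ^ 2) ∧
    aN 8 τ 1 * aN 8 τ 3 * (aN 8 τ 0 ^ 2 + aN 8 τ 4 ^ 2)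
      = aN 8 τ 2 ^ 2 * (aN 8 τ 1 ^ 2 + aN 8 τ 3 ^ 2) ∧
    aN 8 τ 2 * (aN 8 τ 0 ^ 3 + aN 8 τ 4 ^ 3) = aN 8 τ 1 ^ 4 + aN 8 τ 3 ^ 4 := by
  have g0 : aN 8 τ 0 = FF τ 4 := by have := aN_eq τ 0; norm_num at this; exact this
  have g1 : aN 8 τ 1 = -FF τ 3 := by have := aN_eq τ 1; norm_num at this; exact this
  have g2 : aN 8 τ 2 = FF τ 2 := by have := aN_eq τ 2; norm_num at this; exact this
  have g3 : aN 8 τ 3 = -FF τ 1 := by have := aN_eq τ 3; norm_num at this; exact this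
  have g4 : aN 8 τ 4 = FF τ 0 := by have := aN_eq τ 4; norm_num at this; exact this
  have e16 : BB τ 16 = BB τ 0 := by simpa using BB_per τ 0
  have em2 : BB τ (-2) = BB τ 2 := BB_neg τ 2
  have em4 : BB τ (-4) = BB τ 4 := BB_neg τ 4
  have em6 : BB τ (-6) = BB τ 6 := BB_neg τ 6
  have e12 : BB τ 12 = BB τ 4 := by have h := BB_per τ (-4); norm_num at h; rw [h, em4]
  have e10 : BB τ 10 = BB τ 6 := by have h := BB_per τ (-6); norm_num at h; rw [h, em6]
  have e14 : BB τ 14 = BB τ 2 := by have h := BB_per τ (-2); norm_num at h; rw [h, em2]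
  have h00 : FF τ 0 * FF τ 0 = BB τ 0 ^ 2 + BB τ 8 ^ 2 := by
    have h := FF_mul τ 0 0; norm_num at h; linear_combination h
  have h44 : FF τ 4 * FF τ 4 = 2 * BB τ 0 * BB τ 8 := by
    have h := FF_mul τ 4 4; norm_num [e16] at h; linear_combination h
  have h04 : FF τ 0 * FF τ 4 = 2 * BB τ 4 ^ 2 := by
    have h := FF_mul τ 0 4; norm_num [em4, e12] at h; linear_combination h
  have h22 : FF τ 2 * FF τ 2 = BB τ 4 * BB τ 0 + BB τ 4 * BB τ 8 := by
    have h := FF_mul τ 2 2; norm_num [e12] at h; linear_combination h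
  have h02 : FF τ 0 * FF τ 2 = BB τ 2 ^ 2 + BB τ 6 ^ 2 := by
    have h := FF_mul τ 0 2; norm_num [em2, e10] at h; linear_combination h
  have h24 : FF τ 2 * FF τ 4 = 2 * BB τ 2 * BB τ 6 := by
    have h := FF_mul τ 2 4; norm_num [em2, e14] at h; linear_combination h
  have h13 : FF τ 1 * FF τ 3 = BB τ 4 * BB τ 2 + BB τ 4 * BB τ 6 := by
    have h := FF_mul τ 1 3; norm_num [em2, e12] at h; linear_combination h
  have h11 : FF τ 1 * FF τ 1 = BB τ 0 * BB τ 2 + BB τ 6 * BB τ 8 := by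
    have h := FF_mul τ 1 1; norm_num [e10] at h; linear_combination h
  have h33 : FF τ 3 * FF τ 3 = BB τ 0 * BB τ 6 + BB τ 2 * BB τ 8 := by
    have h := FF_mul τ 3 3; norm_num [e14] at h; linear_combination h
  simp only [g0, g1, g2, g3, g4]
  refine ⟨?_, ?_, ?_, ?_, ?_, ?_⟩
  · linear_combination (FF τ 4 * FF τ 4) * h04 + (2 * BB τ 4 ^ 2) * h44
      + (FF τ 0 * FF τ 0) * h04 + (2 * BB τ 4 ^ 2) * h00
      - (2 * (FF τ 2 * FF τ 2) + 2 * (BB τ 4 * BB τ 0 + BB τ 4 * BB τ 8)) * h22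
  · linear_combination (FF τ 3 * FF τ 3) * h04 + (2 * BB τ 4 ^ 2) * h33
      + (FF τ 1 * FF τ 1) * h04 + (2 * BB τ 4 ^ 2) * h11
      - (2 * (FF τ 2 * FF τ 2)) * h13 - (2 * (BB τ 4 * BB τ 2 + BB τ 4 * BB τ 6)) * h22
  · linear_combination (FF τ 2 * FF τ 4) * h04 + (2 * BB τ 4 ^ 2) * h24
      + (FF τ 0 * FF τ 2) * h04 + (2 * BB τ 4 ^ 2) * h02
      - (2 * (FF τ 1 * FF τ 3) + 2 * (BB τ 4 * BB τ 2 + BB τ 4 * BB τ 6)) * h13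
  · linear_combination (FF τ 2 * FF τ 4) * h22 + (BB τ 4 * BB τ 0 + BB τ 4 * BB τ 8) * h24
      + (FF τ 0 * FF τ 2) * h22 + (BB τ 4 * BB τ 0 + BB τ 4 * BB τ 8) * h02
      - ((FF τ 3 * FF τ 3) * h13 + (BB τ 4 * BB τ 2 + BB τ 4 * BB τ 6) * h33
        + (FF τ 1 * FF τ 1) * h13 + (BB τ 4 * BB τ 2 + BB τ 4 * BB τ 6) * h11)
  · linear_combination (FF τ 4 * FF τ 4) * h13 + (BB τ 4 * BB τ 2 + BB τ 4 * BB τ 6) * h44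
      + (FF τ 0 * FF τ 0) * h13 + (BB τ 4 * BB τ 2 + BB τ 4 * BB τ 6) * h00
      - ((FF τ 3 * FF τ 3) * h22 + (BB τ 4 * BB τ 0 + BB τ 4 * BB τ 8) * h33
        + (FF τ 1 * FF τ 1) * h22 + (BB τ 4 * BB τ 0 + BB τ 4 * BB τ 8) * h11)
  · linear_combination (FF τ 4 * FF τ 4) * h24 + (2 * BB τ 2 * BB τ 6) * h44
      + (FF τ 0 * FF τ 0) * h02 + (BB τ 2 ^ 2 + BB τ 6 ^ 2) * h00
      - ((FF τ 3 * FF τ 3) * h33 + (BB τ 0 * BB τ 6 + BB τ 2 * BB τ 8) * h33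
        + (FF τ 1 * FF τ 1) * h11 + (BB τ 0 * BB τ 2 + BB τ 6 * BB τ 8) * h11)
end
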